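/- Let A be a nonempty set with a binary relation R such that the transitive closure of R is a strict total order on A, every element has at most one R-successor and at most one R-predecessor, and A has both a least and a greatest element with respect to the transitive closure of R. Then A is finite. -/
import Mathlib

/-- If `R` is a binary relation on a nonempty set `A` whose transitive closure
is a strict total order, every element has at most one `R`-successor and at
most one `R`-predecessor, and `A` has both a least and a greatest element with
respect to the transitive closure of `R`, then `A` is finite. -/
theorem stmt_9 (A : Type*) [Nonempty A] (R : A → A → Prop)
    (hirr : Irreflexive (Relation.TransGen R))
    (htot : ∀ x y : A, x ≠ y → Relation.TransGen R x y ∨ Relation.TransGen R y x)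
    (hsucc : ∀ a b b' : A, R a b → R a b' → b = b')
    (hpred : ∀ a a' b : A, R a b → R a' b → a = a')
    (hleast : ∃ m : A, ∀ x : A, x ≠ m → Relation.TransGen R m x)
    (hgreatest : ∃ M : A, ∀ x : A, x ≠ M → Relation.TransGen R x M) :
    Finite A := by
  classical
  obtain ⟨m, hm⟩ := hleast
  obtain ⟨M, hM⟩ := hgreatest
  set g : ℕ → A := fun n => Nat.rec m (fun _ a => if h : ∃ b, R a b then h.choose else a) n with hg
  have gsucc : ∀ n, g (n+1) = if h : ∃ b, R (g n) b then h.choose else g n := fun n => rfl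
  have step : ∀ n b, R (g n) b → g (n+1) = b := by
    intro n b hb
    rw [gsucc, dif_pos ⟨b, hb⟩]
    exact hsucc _ _ _ (⟨b, hb⟩ : ∃ b, R (g n) b).choose_spec hb
  have reach : ∀ x y, Relation.TransGen R x y → (∃ n, g n = x) → ∃ n, g n = y := by
    intro x y h
    induction h with
    | single hr => rintro ⟨n, rfl⟩; exact ⟨n+1, step n _ hr⟩
    | tail _ hr ih => intro hx; obtain ⟨n, rfl⟩ := ih hx; exact ⟨n+1, step n _ hr⟩
  have all : ∀ x, ∃ n, g n = x := by
    intro x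
    by_cases hx : x = m
    · exact ⟨0, hx.symm⟩
    · exact reach m x (hm x hx) ⟨0, rfl⟩
  obtain ⟨N, hN⟩ := all M
  have noSucc : ¬ ∃ b, R M b := by
    rintro ⟨b, hb⟩
    have hbM : b ≠ M := by intro h; exact hirr M (Relation.TransGen.single (h ▸ hb))
    exact hirr M ((Relation.TransGen.single hb).trans (hM b hbM))
  have stab : ∀ k, g (N + k) = M := by
    intro k
    induction k with
    | zero => exact hN
    | succ k ih =>
      have h1 : g (N + k + 1) = g (N + k) := by
        rw [gsucc, dif_neg]; rw [ih]; exact noSucc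
      exact h1.trans ih
  have surj : Function.Surjective (fun i : Fin (N+1) => g i) := by
    intro x
    obtain ⟨n, rfl⟩ := all x
    by_cases hn : n ≤ N
    · exact ⟨⟨n, Nat.lt_succ_of_le hn⟩, rfl⟩
    · refine ⟨⟨N, Nat.lt_succ_self N⟩, ?_⟩
      have h2 := stab (n - N)
      rw [Nat.add_sub_cancel' (le_of_not_ge hn)] at h2
      simp [h2, hN]
  exact Finite.of_surjective _ surj
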